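/- arXiv:2505.00349 — 3 statements merged into one kernel-verified Lean document; each statement's English description precedes it below -/
import Mathlib

section
/- Let $A$ be an $m\times m$ matrix with nonnegative entries such that every row sum of $A$ is at most $1$ and every column sum of $A$ is at most $1$. Then there exists a doubly stochastic $m\times m$ matrix $B$ such that $B_{ij}\geq A_{ij}$ for all $i,j$. -/
theorem doubly_stochastic_domination (m : ℕ) (A : Matrix (Fin m) (Fin m) ℝ)
    (hA : ∀ i j, 0 ≤ A i j)
    (hrow : ∀ i, ∑ j, A i j ≤ 1)
    (hcol : ∀ j, ∑ i, A i j ≤ 1) :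
    ∃ B : Matrix (Fin m) (Fin m) ℝ,
      (∀ i j, 0 ≤ B i j) ∧ (∀ i, ∑ j, B i j = 1) ∧ (∀ j, ∑ i, B i j = 1) ∧
      ∀ i j, A i j ≤ B i j := by
  set r : Fin m → ℝ := fun i => 1 - ∑ j, A i j with hr
  set c : Fin m → ℝ := fun j => 1 - ∑ i, A i j with hc
  have hr0 : ∀ i, 0 ≤ r i := fun i => by simp [hr]; linarith [hrow i]
  have hc0 : ∀ j, 0 ≤ c j := fun j => by simp [hc]; linarith [hcol j]
  set S : ℝ := ∑ i, r i with hS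
  have hS0 : 0 ≤ S := Finset.sum_nonneg fun i _ => hr0 i
  have hSc : ∑ j, c j = S := by
    simp only [hS, hr, hc, Finset.sum_sub_distrib]
    rw [Finset.sum_comm]
  rcases eq_or_lt_of_le hS0 with hSe | hSp
  · -- S = 0: all deficits are zero, A itself works
    have hri : ∀ i, r i = 0 := fun i =>
      le_antisymm (by
        have := (Finset.sum_eq_zero_iff_of_nonneg (fun i _ => hr0 i)).mp hSe.symm
        exact le_of_eq (this i (Finset.mem_univ i))) (hr0 i)
    have hci : ∀ j, c j = 0 := fun j => by
      have h : ∑ j, c j = 0 := by rw [hSc, ← hSe]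
      exact (Finset.sum_eq_zero_iff_of_nonneg (fun j _ => hc0 j)).mp h j (Finset.mem_univ j)
    refine ⟨A, hA, fun i => ?_, fun j => ?_, fun i j => le_refl _⟩
    · have := hri i; simp [hr] at this; linarith
    · have := hci j; simp [hc] at this; linarith
  · refine ⟨fun i j => A i j + r i * c j / S, fun i j => ?_, fun i => ?_, fun j => ?_,
      fun i j => ?_⟩
    · have : 0 ≤ r i * c j / S := div_nonneg (mul_nonneg (hr0 i) (hc0 j)) hS0
      linarith [hA i j]
    · have : ∑ j, (A i j + r i * c j / S) = (∑ j, A i j) + r i * (∑ j, c j) / S := by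
        rw [Finset.sum_add_distrib, ← Finset.sum_div, ← Finset.mul_sum]
      rw [this, hSc, mul_div_assoc, div_self (ne_of_gt hSp), mul_one]
      simp [hr]
    · have : ∑ i, (A i j + r i * c j / S) = (∑ i, A i j) + (∑ i, r i) * c j / S := by
        rw [Finset.sum_add_distrib, ← Finset.sum_div, ← Finset.sum_mul]
      rw [this, ← hS, mul_comm, mul_div_assoc, div_self (ne_of_gt hSp), mul_one]
      simp [hc]
    · have : 0 ≤ r i * c j / S := div_nonneg (mul_nonneg (hr0 i) (hc0 j)) hS0
      linarith
end

section
/- Let $A,B,C,D$ be nonnegative $m\times m$ diagonal matrices with diagonal vectors $d^A,d^B,d^C,d^D\in\mathbb{R}^m_+$, and let $m\le n$. Then $\sup_{R\in\mathcal{O}^m,\,P\in\mathcal{O}^n} \mathrm{tr}(R[A\;0]P[B;0]) + \mathrm{tr}(R[C\;0]P[D;0]) = \max_{E\in\mathcal{P}_m} (d^A)^\top E\, d^B + (d^C)^\top E\, d^D$, where $[A\;0]\in\mathbb{R}^{m\times n}$ denotes padding with zero columns, $[B;0]\in\mathbb{R}^{n\times m}$ denotes padding with zero rows, $\mathcal{O}^k$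 is the set of $k\times k$ orthogonal matrices, and $\mathcal{P}_m$ is the set of $m\times m$ permutation matrices. -/
open Matrix Finset

def mdot {m n : ℕ} (A B : Matrix (Fin m) (Fin n) ℝ) : ℝ := ∑ i, ∑ j, A i j * B i j

noncomputable def frob {m n : ℕ} (A : Matrix (Fin m) (Fin n) ℝ) : ℝ := Real.sqrt (mdot A A)

def IsOrth {k : ℕ} (R : Matrix (Fin k) (Fin k) ℝ) : Prop := Rᵀ * R = 1

def rdg (a b : ℕ) {c : ℕ} (x : Fin c → ℝ) : Matrix (Fin a) (Fin b) ℝ :=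
  Matrix.of fun i j => if h : (i : ℕ) = (j : ℕ) ∧ (i : ℕ) < c then x ⟨i, h.2⟩ else 0

noncomputable def descSort {k : ℕ} (f : Fin k → ℝ) : Fin k → ℝ := fun i => f (Tuple.sort f i.rev)

noncomputable def sigCol {a r : ℕ} (X : Matrix (Fin a) (Fin r) ℝ) : Fin r → ℝ :=
  descSort fun i => Real.sqrt ((show (Xᵀ * X).IsHermitian by simpa using Matrix.isHermitian_conjTranspose_mul_self X).eigenvalues i)

noncomputable def sigRow {a b : ℕ} (X : Matrix (Fin a) (Fin b) ℝ) : Fin a → ℝ :=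
  descSort fun i => Real.sqrt ((Matrix.isHermitian_mul_conjTranspose_self X).eigenvalues i)

noncomputable def toDual {m n : ℕ} (G : Matrix (Fin m) (Fin n) ℝ) :
    Matrix (Fin m) (Fin n) ℝ →L[ℝ] ℝ :=
  LinearMap.toContinuousLinearMap
    { toFun := fun Y => mdot G Y
      map_add' := fun Y Z => by
        simp [mdot, Matrix.add_apply, mul_add, Finset.sum_add_distrib]
      map_smul' := fun c Y => by
        simp [mdot, Matrix.smul_apply, smul_eq_mul, Finset.mul_sum, mul_left_comm] }

noncomputable def enorm2 {k : ℕ} (v : Fin k → ℝ) : ℝ := Real.sqrt (∑ i, v i ^ 2)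

def subdiff {m n : ℕ} (f : Matrix (Fin m) (Fin n) ℝ → ℝ) (X : Matrix (Fin m) (Fin n) ℝ) :
    Set (Matrix (Fin m) (Fin n) ℝ) := {G | ∀ Y, f X + mdot G (Y - X) ≤ f Y}

/-! With `w k i = a k * b i + c k * d i ≥ 0` and `Q` the leading `m × m` block of `P`, the
objective is `∑ k i, w k i * R i k * Q k i`. Rows and columns of `R` and `Q` have norm at most
one, so by AM-GM the matrix `|R i k| * |Q k i|` is doubly substochastic; it is dominated entrywise
by a doubly stochastic matrix, and by Birkhoff's theorem a linear functional on doubly stochastic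
matrices is maximised at a permutation matrix. Conversely, permutation matrices `R` and `P`
realise every `∑ k, w k (τ k)`. -/

theorem sum_mul_permMatrix {n R : Type*} [Fintype n] [DecidableEq n] [NonAssocSemiring R]
    (w : Matrix n n R) (σ : Equiv.Perm n) :
    ∑ i, ∑ j, w i j * σ.permMatrix R i j = ∑ i, w i (σ i) := by
  simp

theorem sum_comp_embedding_le {ι κ M : Type*} [Fintype ι] [Fintype κ]
    [AddCommMonoid M] [PartialOrder M] [IsOrderedAddMonoid M]
    {g : κ → M} (hg : ∀ j, 0 ≤ g j) (e : ι ↪ κ) : ∑ i, g (e i) ≤ ∑ j, g j := by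
  rw [← sum_map univ e g]
  exact sum_le_univ_sum_of_nonneg hg

section LinearOrderedField

variable {R : Type*} [Field R] [LinearOrder R] [IsStrictOrderedRing R]

theorem sum_abs_mul_abs_le_one {ι : Type*} [Fintype ι] {f g : ι → R}
    (hf : ∑ i, f i ^ 2 ≤ 1) (hg : ∑ i, g i ^ 2 ≤ 1) : ∑ i, |f i| * |g i| ≤ 1 := by
  have amgm : ∀ i, 2 * (|f i| * |g i|) ≤ f i ^ 2 + g i ^ 2 := fun i => by
    simpa only [sq_abs, mul_assoc] using two_mul_le_add_sq |f i| |g i|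
  have := sum_le_sum fun i (_ : i ∈ univ) => amgm i
  rw [← mul_sum, sum_add_distrib] at this
  linarith

variable {n : Type*} [Fintype n] [DecidableEq n]

theorem exists_perm_sum_mul_le_of_mem_doublyStochastic (w : Matrix n n R) {D : Matrix n n R}
    (hD : D ∈ doublyStochastic R n) :
    ∃ σ : Equiv.Perm n, ∑ i, ∑ j, w i j * D i j ≤ ∑ i, w i (σ i) := by
  let f : Matrix n n R →ₗ[R] R :=
    { toFun := fun X => ∑ i, ∑ j, w i j * X i j
      map_add' := fun X Y => by simp [mul_add, sum_add_distrib]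
      map_smul' := fun r X => by simp [mul_sum, mul_left_comm] }
  rw [← SetLike.mem_coe, doublyStochastic_eq_convexHull_permMatrix] at hD
  obtain ⟨_, ⟨σ, rfl⟩, hσ⟩ :=
    (f.convexOn convex_univ).exists_ge_of_mem_convexHull (Set.subset_univ _) hD
  exact ⟨σ, hσ.trans_eq (sum_mul_permMatrix w σ)⟩

theorem exists_mem_doublyStochastic_le {S : Matrix n n R} (hS : ∀ i j, 0 ≤ S i j)
    (hrow : ∀ i, ∑ j, S i j ≤ 1) (hcol : ∀ j, ∑ i, S i j ≤ 1) :
    ∃ D ∈ doublyStochastic R n, ∀ i j, S i j ≤ D i j := by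
  set r : n → R := fun i => 1 - ∑ j, S i j
  set c : n → R := fun j => 1 - ∑ i, S i j
  have hr : ∀ i, 0 ≤ r i := fun i => sub_nonneg.2 (hrow i)
  have hc : ∀ j, 0 ≤ c j := fun j => sub_nonneg.2 (hcol j)
  set s := ∑ i, r i
  have hs : ∑ j, c j = s := by
    simp only [c, r, s, sum_sub_distrib, sum_comm (f := fun i j => S i j)]
  -- if `s = 0` then all `r i` and `c j` vanish, so the junk value `s / 0 = 0` does no harm
  have cancel :
      ∀ {u : n → R}, (∀ i, 0 ≤ u i) → ∑ i, u i = s → ∀ i, u i * s / s = u i := by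
    intro u hu hus i
    rcases eq_or_ne s 0 with h | h
    · simp [(sum_eq_zero_iff_of_nonneg fun i _ => hu i).1 (hus.trans h) i (mem_univ i)]
    · exact mul_div_cancel_right₀ _ h
  have hcorr : ∀ i j, 0 ≤ r i * c j / s :=
    fun i j => div_nonneg (mul_nonneg (hr i) (hc j)) (sum_nonneg fun i _ => hr i)
  refine ⟨S + Matrix.of fun i j => r i * c j / s, ?_, fun i j => ?_⟩
  · refine mem_doublyStochastic_iff_sum.2 ⟨fun i j => add_nonneg (hS i j) (hcorr i j),
      fun i => ?_, fun j => ?_⟩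
    · change ∑ j, (S i j + r i * c j / s) = 1
      rw [sum_add_distrib, ← sum_div, ← mul_sum, hs, cancel hr rfl i]
      exact add_sub_cancel _ _
    · change ∑ i, (S i j + r i * c j / s) = 1
      rw [sum_add_distrib, ← sum_div, ← sum_mul, mul_comm, cancel hc hs j]
      exact add_sub_cancel _ _
  · simpa using hcorr i j

theorem exists_perm_sum_mul_le_of_sum_le_one {w S : Matrix n n R} (hw : ∀ i j, 0 ≤ w i j)
    (hS : ∀ i j, 0 ≤ S i j) (hrow : ∀ i, ∑ j, S i j ≤ 1)
    (hcol : ∀ j, ∑ i, S i j ≤ 1) :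
    ∃ σ : Equiv.Perm n, ∑ i, ∑ j, w i j * S i j ≤ ∑ i, w i (σ i) := by
  obtain ⟨D, hD, hSD⟩ := exists_mem_doublyStochastic_le hS hrow hcol
  obtain ⟨σ, hσ⟩ := exists_perm_sum_mul_le_of_mem_doublyStochastic w hD
  exact ⟨σ, (sum_le_sum fun i _ => sum_le_sum fun j _ =>
    mul_le_mul_of_nonneg_left (hSD i j) (hw i j)).trans hσ⟩

end LinearOrderedField

section Orthogonal

variable {k : ℕ} {Q : Matrix (Fin k) (Fin k) ℝ}

theorem IsOrth.transpose (hQ : IsOrth Q) : IsOrth Qᵀ := by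
  rwa [IsOrth, transpose_transpose, mul_eq_one_comm]

theorem isOrth_permMatrix (σ : Equiv.Perm (Fin k)) : IsOrth (σ.permMatrix ℝ) := by
  rw [IsOrth, transpose_permMatrix, ← permMatrix_mul, mul_inv_cancel, permMatrix_one]

theorem IsOrth.sum_sq_col (hQ : IsOrth Q) (j : Fin k) : ∑ i, Q i j ^ 2 = 1 := by
  simpa [mul_apply, sq] using congrFun (congrFun hQ j) j

theorem IsOrth.sum_sq_row (hQ : IsOrth Q) (i : Fin k) : ∑ j, Q i j ^ 2 = 1 :=
  hQ.transpose.sum_sq_col i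

end Orthogonal

theorem IsOrth.exists_perm_sum_mul_le {m n : ℕ} (e : Fin m ↪ Fin n)
    {w : Matrix (Fin m) (Fin m) ℝ} (hw : ∀ k i, 0 ≤ w k i) {R : Matrix (Fin m) (Fin m) ℝ}
    {P : Matrix (Fin n) (Fin n) ℝ} (hR : IsOrth R) (hP : IsOrth P) :
    ∃ σ : Equiv.Perm (Fin m),
      ∑ k, ∑ i, w k i * (R i k * P (e k) (e i)) ≤ ∑ k, w k (σ k) := by
  have hrow : ∀ k, ∑ i, |R i k| * |P (e k) (e i)| ≤ 1 := fun k =>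
    sum_abs_mul_abs_le_one (hR.sum_sq_col k).le
      ((sum_comp_embedding_le (fun _ => sq_nonneg _) e).trans (hP.sum_sq_row (e k)).le)
  have hcol : ∀ i, ∑ k, |R i k| * |P (e k) (e i)| ≤ 1 := fun i =>
    sum_abs_mul_abs_le_one (hR.sum_sq_row i).le
      ((sum_comp_embedding_le (g := fun j => P j (e i) ^ 2) (fun _ => sq_nonneg _) e).trans
        (hP.sum_sq_col (e i)).le)
  obtain ⟨σ, hσ⟩ := exists_perm_sum_mul_le_of_sum_le_one
    (S := .of fun k i => |R i k| * |P (e k) (e i)|) hw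
    (fun k i => mul_nonneg (abs_nonneg _) (abs_nonneg _)) hrow hcol
  refine ⟨σ, le_trans (sum_le_sum fun k _ => sum_le_sum fun i _ => ?_) hσ⟩
  exact mul_le_mul_of_nonneg_left ((le_abs_self _).trans (abs_mul _ _).le) (hw k i)

section Padding

variable {m n : ℕ} (hmn : m ≤ n)

theorem rdg_apply_eq_ite (x : Fin m → ℝ) (k : Fin m) (l : Fin n) :
    rdg m n x k l = if l = Fin.castLE hmn k then x k else 0 := by
  by_cases h : l = Fin.castLE hmn k
  · subst h
    simp [rdg]
  · rw [if_neg h, rdg, of_apply, dif_neg]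
    exact fun hkl => h (Fin.ext hkl.1.symm)

theorem trace_mul_rdg (x y : Fin m → ℝ) (R : Matrix (Fin m) (Fin m) ℝ)
    (P : Matrix (Fin n) (Fin n) ℝ) :
    trace (R * rdg m n x * P * (rdg m n y)ᵀ) =
      ∑ k, ∑ i, x k * y i * (R i k * P (Fin.castLE hmn k) (Fin.castLE hmn i)) := by
  rw [sum_comm]
  simp only [trace, Matrix.diag, mul_apply, transpose_apply, rdg_apply_eq_ite hmn, mul_ite,
    mul_zero, sum_ite_eq', mem_univ, if_true, sum_mul]
  refine sum_congr rfl fun i _ => ?_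
  rw [sum_comm]
  simp only [ite_mul, zero_mul, sum_ite_eq', mem_univ, if_true]
  exact sum_congr rfl fun k _ => by ring

theorem trace_mul_rdg_permMatrix (x y : Fin m → ℝ) (τ : Equiv.Perm (Fin m)) :
    trace ((τ⁻¹).permMatrix ℝ * rdg m n x *
        (τ.viaEmbedding (Fin.castLEEmb hmn)).permMatrix ℝ * (rdg m n y)ᵀ) =
      ∑ k, x k * y (τ k) := by
  rw [trace_mul_rdg hmn]
  refine sum_congr rfl fun k _ => ?_
  have hτ := τ.viaEmbedding_apply (Fin.castLEEmb hmn) k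
  simp only [Fin.castLEEmb_apply] at hτ
  simp [hτ]

end Padding

theorem two_pair_von_neumann (m n : ℕ) (hmn : m ≤ n) (a b c d : Fin m → ℝ)
    (ha : ∀ i, 0 ≤ a i) (hb : ∀ i, 0 ≤ b i) (hc : ∀ i, 0 ≤ c i) (hd : ∀ i, 0 ≤ d i) :
    sSup {t : ℝ | ∃ (R : Matrix (Fin m) (Fin m) ℝ) (P : Matrix (Fin n) (Fin n) ℝ),
        IsOrth R ∧ IsOrth P ∧
        t = Matrix.trace (R * rdg m n a * P * (rdg m n b)ᵀ)
            + Matrix.trace (R * rdg m n c * P * (rdg m n d)ᵀ)} =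
      ⨆ τ : Equiv.Perm (Fin m), ((∑ i, a i * b (τ i)) + ∑ i, c i * d (τ i)) := by
  set f := fun τ : Equiv.Perm (Fin m) => (∑ i, a i * b (τ i)) + ∑ i, c i * d (τ i)
  obtain ⟨τ, hτ⟩ := exists_eq_ciSup_of_finite (f := f)
  refine IsGreatest.csSup_eq ⟨⟨(τ⁻¹).permMatrix ℝ,
    (τ.viaEmbedding (Fin.castLEEmb hmn)).permMatrix ℝ,
    isOrth_permMatrix _, isOrth_permMatrix _, ?_⟩, ?_⟩
  · rw [← hτ, trace_mul_rdg_permMatrix, trace_mul_rdg_permMatrix]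
  · rintro _ ⟨R, P, hR, hP, rfl⟩
    obtain ⟨σ, hσ⟩ := hR.exists_perm_sum_mul_le (Fin.castLEEmb hmn)
      (w := fun k i => a k * b i + c k * d i)
      (fun k i => add_nonneg (mul_nonneg (ha k) (hb i)) (mul_nonneg (hc k) (hd i))) hP
    calc _ = ∑ k, ∑ i, (a k * b i + c k * d i) *
          (R i k * P (Fin.castLE hmn k) (Fin.castLE hmn i)) := by
          simp only [trace_mul_rdg hmn, ← sum_add_distrib, add_mul]
      _ ≤ f σ := hσ.trans_eq (by simp only [f, sum_add_distrib])
      _ ≤ ⨆ τ, f τ := le_ciSup (Finite.bddAbove_range f) σ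
end

section
/- Let $0<\mu\le L$, $w>0$, and consider $S_3(g,y) = g(\mu y+1) + g(Ly+1) - g^2 - (Ly+1)(\mu y+1)$ over $g\in[0,1+Lw]$ and $y>0$. Then $\sup S_3 = \frac{L(L-\mu)^2 w^2}{4\mu}$, and this supremum is attained; moreover when $L>\mu$ it is attained exactly at $g=1+Lw$, $y=\frac{(L+\mu)w}{2\mu}$, and $S_3(g,y)<0$ whenever $g\le 1$. -/
set_option maxHeartbeats 1000000


theorem S3_subproblem_analysis (L mu w : ℝ) (hmu : 0 < mu) (hL : mu ≤ L) (hw : 0 < w) :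
    IsGreatest
      {t : ℝ | ∃ g y : ℝ, 0 ≤ g ∧ g ≤ 1 + L * w ∧ 0 < y ∧
        t = g * (mu * y + 1) + g * (L * y + 1) - g ^ 2 - (L * y + 1) * (mu * y + 1)}
      (L * (L - mu) ^ 2 * w ^ 2 / (4 * mu)) ∧
    (mu < L →
      (∀ g y : ℝ, 0 ≤ g → g ≤ 1 + L * w → 0 < y →
        (g * (mu * y + 1) + g * (L * y + 1) - g ^ 2 - (L * y + 1) * (mu * y + 1)
            = L * (L - mu) ^ 2 * w ^ 2 / (4 * mu) ↔
          g = 1 + L * w ∧ y = (L + mu) * w / (2 * mu))) ∧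
      (∀ g y : ℝ, 0 ≤ g → g ≤ 1 + L * w → 0 < y → g ≤ 1 →
        g * (mu * y + 1) + g * (L * y + 1) - g ^ 2 - (L * y + 1) * (mu * y + 1) < 0)) := by
  have hL0 : 0 < L := lt_of_lt_of_le hmu hL
  have hmne : mu ≠ 0 := ne_of_gt hmu
  have hT4 : 4 * mu * (L * (L - mu) ^ 2 * w ^ 2 / (4 * mu)) = L * (L - mu) ^ 2 * w ^ 2 := by
    field_simp
  refine ⟨⟨⟨1 + L * w, (L + mu) * w / (2 * mu), by nlinarith, le_refl _, by positivity, ?_⟩, ?_⟩, ?_⟩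
  · field_simp
    ring
  · rintro t ⟨g, y, hg0, hg1, hy, rfl⟩
    by_cases hg : g ≤ 1
    · have h1 : 0 < 1 - g + mu * y := by nlinarith
      have h2 : 0 < 1 - g + L * y := by nlinarith
      have hT0 : 0 ≤ L * (L - mu) ^ 2 * w ^ 2 / (4 * mu) := by positivity
      nlinarith [mul_pos h1 h2]
    · push_neg at hg
      have key : (L - mu) ^ 2 * ((1 + L * w - g) * (L * w + g - 1)) +
          (2 * L * mu * y - (L + mu) * (g - 1)) ^ 2 =
          4 * L * mu * (L * (L - mu) ^ 2 * w ^ 2 / (4 * mu)) -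
          4 * L * mu * (g * (mu * y + 1) + g * (L * y + 1) - g ^ 2 -
            (L * y + 1) * (mu * y + 1)) := by
        linear_combination (-L) * hT4
      nlinarith [sq_nonneg (2 * L * mu * y - (L + mu) * (g - 1)),
        mul_nonneg (mul_nonneg (sq_nonneg (L - mu)) (by linarith : (0:ℝ) ≤ 1 + L * w - g))
          (by nlinarith : (0:ℝ) ≤ L * w + g - 1),
        mul_pos hL0 hmu]
  · intro hlt
    constructor
    · intro g y hg0 hg1 hy
      constructor
      · intro heq
        have hT : 0 < L * (L - mu) ^ 2 * w ^ 2 / (4 * mu) :=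
          div_pos (mul_pos (mul_pos hL0 (pow_pos (by linarith) 2)) (pow_pos hw 2))
            (by linarith)
        have hg : 1 < g := by
          by_contra h
          push_neg at h
          have h1 : 0 < 1 - g + mu * y := by nlinarith
          have h2 : 0 < 1 - g + L * y := by nlinarith
          nlinarith [mul_pos h1 h2]
        have key : (L - mu) ^ 2 * ((1 + L * w - g) * (L * w + g - 1)) +
            (2 * L * mu * y - (L + mu) * (g - 1)) ^ 2 = 0 := by
          linear_combination (-(4 * L * mu)) * heq + (-L) * hT4
        have hprod : 0 ≤ (L - mu) ^ 2 * ((1 + L * w - g) * (L * w + g - 1)) :=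
          mul_nonneg (sq_nonneg _)
            (mul_nonneg (by linarith) (by nlinarith))
        have hQ0 : (2 * L * mu * y - (L + mu) * (g - 1)) ^ 2 = 0 := by
          linarith [sq_nonneg (2 * L * mu * y - (L + mu) * (g - 1))]
        have hQ : 2 * L * mu * y - (L + mu) * (g - 1) = 0 :=
          pow_eq_zero_iff (by norm_num) |>.mp hQ0
        have hP0 : (1 + L * w - g) * (L * w + g - 1) = 0 := by
          have h2 : (L - mu) ^ 2 ≠ 0 := pow_ne_zero 2 (by linarith)
          have h3 : (L - mu) ^ 2 * ((1 + L * w - g) * (L * w + g - 1)) = 0 := by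
            linarith
          exact (mul_eq_zero.mp h3).resolve_left h2
        have hG : 1 + L * w - g = 0 := by
          rcases mul_eq_zero.mp hP0 with h | h
          · exact h
          · nlinarith
        refine ⟨by linarith, ?_⟩
        rw [eq_div_iff (by positivity : (2 * mu) ≠ 0)]
        have hLy : L * (y * (2 * mu)) = L * ((L + mu) * w) := by
          linear_combination hQ - (L + mu) * hG
        exact mul_left_cancel₀ (ne_of_gt hL0) hLy
      · rintro ⟨rfl, rfl⟩
        field_simp
        ring
    · intro g y hg0 hg1 hy hg
      have h1 : 0 < 1 - g + mu * y := by nlinarith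
      have h2 : 0 < 1 - g + L * y := by nlinarith
      nlinarith [mul_pos h1 h2]
end
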